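/- Weighted vanishing sum (identity (t15), second part of Lemma 2 of the paper): for every k with 1 ≤ k ≤ N and every m ∈ {1,…,N}, ∑_{I ⊆ {1,…,N}, |I| = k, m ∈ I} ( ∏_{i∈I, j∉I} φ(x_j − x_i) ) · ( ∑_{l ∈ I, l ≠ m} f(x_l − x_m) ) = 0. -/

import Mathlib

/-!
Index the points `x_j = j / N` by `ZMod N`. Since `ϑ(z + 1) = -ϑ(z)`, both `φ` and `f` are
`1`-periodic, so every factor of the summand only depends on differences in `ZMod N`.
The reflection `j ↦ 2m - j` fixes `m`, preserves `|I|`, and flips the sign of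
`∑_{l ∈ I, l ≠ m} f(x_l - x_m)` because `f` is odd. It turns `∏_{i ∈ I, j ∉ I} φ(x_j - x_i)` into
`∏_{i ∈ I, j ∉ I} φ(x_i - x_j)`, which is the same product: for every `d`, the pairs in `I × Iᶜ`
with difference `d` and with difference `-d` are equally many. Hence the sum is its own negative.
-/

open Complex Finset

/-- The odd theta function `ϑ(z|τ)`. -/
noncomputable def ϑ (τ : ℂ) (z : ℂ) : ℂ :=
  -∑' k : ℤ, Complex.exp (Real.pi * Complex.I * τ * ((k : ℂ) + 1 / 2) ^ 2
      + 2 * Real.pi * Complex.I * (z + 1 / 2) * ((k : ℂ) + 1 / 2))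

/-- The Kronecker elliptic function `φ(z) = ϑ'(0)·ϑ(z+ħ)/(ϑ(z)·ϑ(ħ))`. -/
noncomputable def φ₁ (τ hbar z : ℂ) : ℂ :=
  deriv (ϑ τ) 0 * ϑ τ (z + hbar) / (ϑ τ z * ϑ τ hbar)

/-- The first Eisenstein function `E₁(z) = ϑ'(z)/ϑ(z)`. -/
noncomputable def E₁ (τ z : ℂ) : ℂ := deriv (ϑ τ) z / ϑ τ z

/-- `g(x) = E₁(ħ+x) − E₁(x)`. -/
noncomputable def gfun (τ hbar x : ℂ) : ℂ := E₁ τ (hbar + x) - E₁ τ x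

/-- `f(x) = g(x) − g(−x)`. -/
noncomputable def ffun (τ hbar x : ℂ) : ℂ := gfun τ hbar x - gfun τ hbar (-x)

open Function

theorem ϑ_antiperiodic (τ : ℂ) : Antiperiodic (ϑ τ) 1 := by
  intro z
  unfold ϑ
  rw [neg_neg, ← tsum_neg]
  refine tsum_congr fun k => ?_
  -- the `k`-th term picks up the factor `exp(πi(2k + 1)) = -1`
  rw [show Real.pi * I * τ * ((k : ℂ) + 1 / 2) ^ 2
        + 2 * Real.pi * I * (z + 1 + 1 / 2) * ((k : ℂ) + 1 / 2)
      = Real.pi * I * τ * ((k : ℂ) + 1 / 2) ^ 2 + 2 * Real.pi * I * (z + 1 / 2) * ((k : ℂ) + 1 / 2)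
        + (k * (2 * Real.pi * I) + Real.pi * I) by ring]
  simp [exp_add, exp_int_mul_two_pi_mul_I, exp_pi_mul_I]

theorem deriv_ϑ_antiperiodic (τ : ℂ) : Antiperiodic (deriv (ϑ τ)) 1 := fun z => by
  rw [← deriv_comp_add_const, (ϑ_antiperiodic τ).funext, deriv.neg']

theorem E₁_periodic (τ : ℂ) : Periodic (E₁ τ) 1 :=
  (deriv_ϑ_antiperiodic τ).div (ϑ_antiperiodic τ)

theorem φ₁_periodic (τ hbar : ℂ) : Periodic (φ₁ τ hbar) 1 := fun z => by
  simp only [φ₁, add_right_comm z 1 hbar, ϑ_antiperiodic τ _, mul_neg, neg_mul, neg_div_neg_eq]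

theorem gfun_periodic (τ hbar : ℂ) : Periodic (gfun τ hbar) 1 :=
  ((E₁_periodic τ).const_add hbar).sub (E₁_periodic τ)

theorem ffun_periodic (τ hbar : ℂ) : Periodic (ffun τ hbar) 1 := fun x => by
  rw [ffun, ffun, gfun_periodic, neg_add, ← sub_eq_add_neg, (gfun_periodic τ hbar).sub_eq]

theorem ffun_neg (τ hbar x : ℂ) : ffun τ hbar (-x) = -ffun τ hbar x := by
  rw [ffun, ffun, neg_neg, neg_sub]

theorem compl_map_equiv {α : Type*} [Fintype α] [DecidableEq α] (e : α ≃ α) (s : Finset α) :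
    (s.map e.toEmbedding)ᶜ = sᶜ.map e.toEmbedding := by
  rw [compl_eq_univ_sdiff, compl_eq_univ_sdiff, Finset.map_sdiff, map_univ_equiv]

section ReflectionInvolution

variable {G : Type*} [AddCommGroup G] [Fintype G] [DecidableEq G]

theorem sum_sum_compl_sub_comm {M : Type*} [AddCommMonoid M] [IsLeftCancelAdd M]
    (F : G → M) (s : Finset G) :
    ∑ i ∈ s, ∑ j ∈ sᶜ, F (j - i) = ∑ i ∈ s, ∑ j ∈ sᶜ, F (i - j) := by
  -- adding the terms with `j ∈ s` to either side gives `#s • ∑ g, F g`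
  have inner : ∑ i ∈ s, ∑ j ∈ s, F (j - i) = ∑ i ∈ s, ∑ j ∈ s, F (i - j) := sum_comm
  have total : ∑ i ∈ s, ∑ j, F (j - i) = ∑ i ∈ s, ∑ j, F (i - j) := by
    refine sum_congr rfl fun i _ => ?_
    exact ((Equiv.subRight i).sum_comp F).trans ((Equiv.subLeft i).sum_comp F).symm
  simp only [← sum_add_sum_compl s, sum_add_distrib, inner] at total
  exact add_left_cancel total

theorem prod_prod_compl_sub_comm {M : Type*} [CommMonoid M] (F : G → M) (s : Finset G) :
    ∏ i ∈ s, ∏ j ∈ sᶜ, F (j - i) = ∏ i ∈ s, ∏ j ∈ sᶜ, F (i - j) := by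
  -- cancel in the free commutative monoid `Multiset M`, as `M` need not be cancellative
  have h := congrArg Multiset.prod (sum_sum_compl_sub_comm (fun d => ({F d} : Multiset M)) s)
  simpa only [Multiset.prod_sum, Multiset.prod_singleton] using h

theorem prod_prod_compl_map_subLeft {M : Type*} [CommMonoid M] (F : G → M) (c : G)
    (s : Finset G) :
    ∏ a ∈ s.map (Equiv.subLeft c).toEmbedding, ∏ b ∈ (s.map (Equiv.subLeft c).toEmbedding)ᶜ,
      F (b - a) = ∏ a ∈ s, ∏ b ∈ sᶜ, F (b - a) := by
  simp only [compl_map_equiv, prod_map, Equiv.coe_toEmbedding, Equiv.subLeft_apply,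
    sub_sub_sub_cancel_left]
  exact (prod_prod_compl_sub_comm F s).symm

omit [Fintype G] in
theorem sum_erase_map_subLeft_add_self {M : Type*} [AddCommGroup M] {F : G → M}
    (hF : ∀ d, F (-d) = -F d) (m : G) (s : Finset G) :
    ∑ l ∈ (s.map (Equiv.subLeft (m + m)).toEmbedding).erase m, F (l - m)
      = -∑ l ∈ s.erase m, F (l - m) := by
  have hm : (Equiv.subLeft (m + m)).toEmbedding m = m := by simp
  have herase : (s.map (Equiv.subLeft (m + m)).toEmbedding).erase m
      = (s.erase m).map (Equiv.subLeft (m + m)).toEmbedding := by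
    rw [map_erase, hm]
  rw [herase, sum_map, ← sum_neg_distrib]
  refine sum_congr rfl fun l _ => ?_
  rw [← hF, Equiv.coe_toEmbedding, Equiv.subLeft_apply]
  congr 1
  abel

theorem sum_filter_mem_powersetCard_mul_sum_erase_eq_zero {M : Type*} [CommRing M]
    [NoZeroDivisors M] [CharZero M] (Φ F : G → M) (hF : ∀ d, F (-d) = -F d) (k : ℕ) (m : G) :
    ∑ s ∈ (univ.powersetCard k).filter (m ∈ ·),
      (∏ a ∈ s, ∏ b ∈ sᶜ, Φ (b - a)) * ∑ l ∈ s.erase m, F (l - m) = 0 := by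
  set ρ := (Equiv.subLeft (m + m)).toEmbedding
  have hρρ (s : Finset G) : (s.map ρ).map ρ = s := by
    conv_rhs => rw [← map_refl (s := s)]
    rw [map_map]
    congr 1
    ext x
    simp [ρ]
  have hρ_mem (s) (hs : s ∈ (univ.powersetCard k).filter (m ∈ ·)) :
      s.map ρ ∈ (univ.powersetCard k).filter (m ∈ ·) := by
    simp only [mem_filter, mem_powersetCard, subset_univ, true_and, card_map] at hs ⊢
    exact ⟨hs.1, mem_map.2 ⟨m, hs.2, by simp [ρ]⟩⟩
  rw [← CharZero.eq_neg_self_iff, ← sum_neg_distrib]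
  refine sum_nbij' (·.map ρ) (·.map ρ) hρ_mem hρ_mem (fun s _ => hρρ s) (fun s _ => hρρ s)
    fun s _ => ?_
  rw [prod_prod_compl_map_subLeft, sum_erase_map_subLeft_add_self hF, mul_neg, neg_neg]

end ReflectionInvolution

noncomputable def sampleZMod (N : ℕ) {α : Type*} (h : ℂ → α) (d : ZMod N) : α :=
  h ((d.val : ℂ) / N)

section SamplingOnZMod

variable {N : ℕ} [NeZero N] {α : Type*} {h : ℂ → α}

theorem sampleZMod_intCast (hh : Periodic h 1) (a : ℤ) :
    sampleZMod N h a = h ((a : ℂ) / N) := by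
  have hN : (N : ℂ) ≠ 0 := Nat.cast_ne_zero.2 (NeZero.ne N)
  have hval : (((a : ZMod N).val : ℤ) : ℂ) = a - N * (a / N : ℤ) := by
    rw [ZMod.val_intCast, Int.emod_def]; push_cast; ring
  rw [sampleZMod, ← Int.cast_natCast, hval, sub_div, mul_div_cancel_left₀ _ hN,
    ← mul_one ((a / N : ℤ) : ℂ), hh.sub_int_mul_eq]

theorem sampleZMod_natCast_sub (hh : Periodic h 1) (i j : ℕ) :
    sampleZMod N h ((j : ZMod N) - i) = h ((j : ℂ) / N - (i : ℂ) / N) := by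
  rw [← sub_div]
  exact_mod_cast sampleZMod_intCast hh ((j : ℤ) - i)

theorem sampleZMod_neg [Neg α] (hh : Periodic h 1) (hodd : ∀ x, h (-x) = -h x) (d : ZMod N) :
    sampleZMod N h (-d) = -sampleZMod N h d := by
  rw [← ZMod.intCast_zmod_cast d, ← Int.cast_neg, sampleZMod_intCast hh, sampleZMod_intCast hh,
    Int.cast_neg, neg_div, hodd]

end SamplingOnZMod

section RepresentativesInIcc

variable (N : ℕ) [NeZero N]

theorem natCast_val_sub_one_add_one (x : ZMod N) : (((x - 1).val + 1 : ℕ) : ZMod N) = x := by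
  push_cast
  rw [ZMod.natCast_zmod_val, sub_add_cancel]

def iccRepr : ZMod N ↪ ℕ :=
  ⟨fun x => (x - 1).val + 1, LeftInverse.injective (natCast_val_sub_one_add_one N)⟩

theorem natCast_iccRepr (x : ZMod N) : ((iccRepr N x : ℕ) : ZMod N) = x :=
  natCast_val_sub_one_add_one N x

theorem map_iccRepr_univ : univ.map (iccRepr N) = Icc 1 N := by
  refine eq_of_subset_of_card_le (fun n hn => ?_) (by simp)
  obtain ⟨x, -, rfl⟩ := mem_map.1 hn
  have := ZMod.val_lt (x - 1)
  simp only [iccRepr, Function.Embedding.coeFn_mk, mem_Icc]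
  omega

end RepresentativesInIcc

theorem weighted_f_sum_vanishes_general (τ : ℂ) (hbar : ℂ) (N : ℕ) (hN : 0 < N)
    (k : ℕ) (m : ℕ) (hm : m ∈ Finset.Icc 1 N) :
    ∑ I ∈ ((Finset.Icc 1 N).powersetCard k).filter (fun I => m ∈ I),
      (∏ i ∈ I, ∏ j ∈ Finset.Icc 1 N \ I, φ₁ τ hbar ((j : ℂ) / N - (i : ℂ) / N)) *
        (∑ l ∈ I.erase m, ffun τ hbar ((l : ℂ) / N - (m : ℂ) / N)) = 0 := by
  have : NeZero N := ⟨hN.ne'⟩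
  rw [← map_iccRepr_univ] at hm ⊢
  obtain ⟨m, -, rfl⟩ := mem_map.1 hm
  rw [powersetCard_map, filter_map, sum_map]
  refine (sum_congr ?_ fun s _ => ?_).trans
    (sum_filter_mem_powersetCard_mul_sum_erase_eq_zero (sampleZMod N (φ₁ τ hbar))
      (sampleZMod N (ffun τ hbar)) (sampleZMod_neg (ffun_periodic τ hbar) (ffun_neg τ hbar)) k m)
  · ext s; simp
  · rw [RelEmbedding.coe_toEmbedding, mapEmbedding_apply, ← Finset.map_sdiff,
      ← compl_eq_univ_sdiff, ← map_erase]
    simp only [prod_map, sum_map, ← sampleZMod_natCast_sub (φ₁_periodic τ hbar),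
      ← sampleZMod_natCast_sub (ffun_periodic τ hbar), natCast_iccRepr]

/-- Identity (t15) of the paper: the weighted vanishing sum. -/
theorem weighted_f_sum_vanishes (τ : ℂ) (hτ : 0 < τ.im) (hbar : ℂ) (N : ℕ) (hN : 0 < N)
    (k : ℕ) (hk1 : 1 ≤ k) (hkN : k ≤ N) (m : ℕ) (hm : m ∈ Finset.Icc 1 N) :
    ∑ I ∈ ((Finset.Icc 1 N).powersetCard k).filter (fun I => m ∈ I),
      (∏ i ∈ I, ∏ j ∈ Finset.Icc 1 N \ I, φ₁ τ hbar ((j : ℂ) / N - (i : ℂ) / N)) *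
        (∑ l ∈ I.erase m, ffun τ hbar ((l : ℂ) / N - (m : ℂ) / N)) = 0 :=
  weighted_f_sum_vanishes_general τ hbar N hN k m hm
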